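/- arXiv:2008.13263 — 2 statements merged into one kernel-verified Lean document; each statement's English description precedes it below -/
import Mathlib

section
/- For x > 0, α, τ ∈ ℝ and δ ∈ [0, π/2), one has |Re K_{α+iτ}(x)| ≤ e^{-δ|τ|} K_α(x cos δ). -/
/-!
Since `cos` is even we may take `τ ≥ 0`, and `Re K_{α+iτ}(x)` is the real part of
`∫_0^∞ F(u) du` for the entire function `F(z) = e^{-x cosh z} cosh(α z) e^{iτz}`.
Shift the contour to the line `Im z = δ`. On `u + iδ` we have `Re cosh(u + iδ) = cosh u cos δ`
and `|cosh w| ≤ cosh (Re w)`, so `|F(u + iδ)| ≤ e^{-τδ} e^{-x cos δ cosh u} cosh(α u)`, which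
integrates to `e^{-τδ} K_α(x cos δ)`; the same bound (uniform for `0 ≤ Im z ≤ δ < π/2`) kills
the vertical sides at infinity. The remaining segment `[0, iδ]` contributes `i` times a real
number, because `F` is real on the imaginary axis, so it drops out of the real part.
-/

open MeasureTheory

/-- `Re K_{α+iτ}(x) = ∫_0^∞ e^{-x cosh u} cosh(α u) cos(τ u) du`. -/
noncomputable def ReK (α τ x : ℝ) : ℝ :=
  ∫ u in Set.Ioi (0:ℝ), Real.exp (-(x * Real.cosh u)) * Real.cosh (α * u) * Real.cos (τ * u)

/-- `K_α(y) = ∫_0^∞ e^{-y cosh u} cosh(α u) du` (real-valued for real `α`). -/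
noncomputable def Kreal (α y : ℝ) : ℝ :=
  ∫ u in Set.Ioi (0:ℝ), Real.exp (-(y * Real.cosh u)) * Real.cosh (α * u)

open Filter Complex Set Topology

lemma Real.cosh_le_exp_abs (t : ℝ) : Real.cosh t ≤ Real.exp |t| := by
  rw [← Real.cosh_abs, Real.cosh_eq]
  linarith [Real.exp_le_exp.2 (neg_le_self (abs_nonneg t))]

lemma Complex.norm_cosh_le (w : ℂ) : ‖cosh w‖ ≤ Real.cosh w.re := by
  rw [cosh, Real.cosh_eq, norm_div, Complex.norm_ofNat]
  gcongr
  simpa [Complex.norm_exp] using norm_add_le (cexp w) (cexp (-w))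

lemma Complex.cosh_add_mul_I_re (u t : ℝ) : (cosh (u + t * I)).re = Real.cosh u * Real.cos t := by
  simp [cosh, exp_re, Real.cosh_eq]
  ring

/-- Cauchy's theorem on the rectangles `[0, R] × [0, δ]`, letting `R → ∞`. -/
theorem integral_Ioi_eq_integral_Ioi_add_mul_I {f : ℂ → ℂ} (hf : Differentiable ℂ f) (δ : ℝ)
    (h_real : IntegrableOn (fun u : ℝ => f u) (Ioi 0))
    (h_shift : IntegrableOn (fun u : ℝ => f (u + δ * I)) (Ioi 0))
    (h_vert : Tendsto (fun R : ℝ => ∫ t in (0:ℝ)..δ, f (R + t * I)) atTop (𝓝 0)) :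
    ∫ u in Ioi (0:ℝ), f u = (∫ u in Ioi (0:ℝ), f (u + δ * I)) + I • ∫ t in (0:ℝ)..δ, f (t * I) := by
  have h_rect (R : ℝ) : ∫ u in (0:ℝ)..R, f u =
      (∫ u in (0:ℝ)..R, f (u + δ * I)) - I • (∫ t in (0:ℝ)..δ, f (R + t * I))
        + I • ∫ t in (0:ℝ)..δ, f (t * I) := by
    have h := integral_boundary_rect_eq_zero_of_differentiableOn f 0 (R + δ * I)
      hf.differentiableOn
    simp only [zero_re, zero_im, add_re, add_im, ofReal_re, ofReal_im, mul_re, mul_im, I_re,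
      I_im, mul_zero, mul_one, zero_mul, sub_zero, zero_add, add_zero, ofReal_zero] at h
    simp only [smul_eq_mul]
    linear_combination h
  have h_lim := ((intervalIntegral_tendsto_integral_Ioi 0 h_shift tendsto_id).sub
    (h_vert.const_smul I)).add (tendsto_const_nhds (x := I • ∫ t in (0:ℝ)..δ, f (t * I)))
  rw [smul_zero, sub_zero] at h_lim
  exact tendsto_nhds_unique (intervalIntegral_tendsto_integral_Ioi 0 h_real tendsto_id)
    (h_lim.congr fun R => (h_rect R).symm)

noncomputable def besselKIntegrand (α y u : ℝ) : ℝ :=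
  Real.exp (-(y * Real.cosh u)) * Real.cosh (α * u)

lemma besselKIntegrand_nonneg (α y u : ℝ) : 0 ≤ besselKIntegrand α y u :=
  mul_nonneg (Real.exp_pos _).le (Real.cosh_pos _).le

lemma besselKIntegrand_antitone (α u : ℝ) : Antitone fun y => besselKIntegrand α y u := by
  intro y y' h
  dsimp only [besselKIntegrand]
  gcongr

lemma besselKIntegrand_le_exp_neg (α : ℝ) {y : ℝ} (hy : 0 < y) :
    ∀ᶠ u in atTop, besselKIntegrand α y u ≤ Real.exp (-u) := by
  have h_exp : Tendsto (fun u : ℝ => Real.exp u / u) atTop atTop := by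
    simpa using Real.tendsto_exp_div_pow_atTop 1
  filter_upwards [h_exp.eventually_ge_atTop (2 * (|α| + 1) / y), eventually_gt_atTop 0]
    with u hu hu0
  have h_cosh_α : Real.cosh (α * u) ≤ Real.exp (|α| * u) := by
    simpa [abs_mul, abs_of_pos hu0] using Real.cosh_le_exp_abs (α * u)
  have h_cosh_u : Real.exp u / 2 ≤ Real.cosh u := by
    rw [Real.cosh_eq]; linarith [Real.exp_pos (-u)]
  have h_lin : 2 * (|α| + 1) * u ≤ Real.exp u * y := (div_le_div_iff₀ hy hu0).mp hu
  calc besselKIntegrand α y u ≤ Real.exp (-(y * Real.cosh u)) * Real.exp (|α| * u) := by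
        unfold besselKIntegrand; gcongr
    _ = Real.exp (|α| * u - y * Real.cosh u) := by rw [← Real.exp_add]; ring_nf
    _ ≤ Real.exp (-u) := Real.exp_le_exp.2 (by nlinarith)

lemma integrableOn_besselKIntegrand (α : ℝ) {y : ℝ} (hy : 0 < y) :
    IntegrableOn (besselKIntegrand α y) (Ioi 0) := by
  refine integrable_of_isBigO_exp_neg one_pos (by unfold besselKIntegrand; fun_prop) ?_
  refine Asymptotics.IsBigO.of_bound 1 ?_
  filter_upwards [besselKIntegrand_le_exp_neg α hy] with u hu
  rw [Real.norm_of_nonneg (besselKIntegrand_nonneg α y u),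
    Real.norm_of_nonneg (Real.exp_pos _).le, one_mul, neg_one_mul]
  exact hu

lemma tendsto_besselKIntegrand_atTop (α : ℝ) {y : ℝ} (hy : 0 < y) :
    Tendsto (besselKIntegrand α y) atTop (𝓝 0) :=
  squeeze_zero' (Eventually.of_forall (besselKIntegrand_nonneg α y))
    (besselKIntegrand_le_exp_neg α hy) (Real.tendsto_exp_atBot.comp tendsto_neg_atTop_atBot)

noncomputable def besselIntegrand (x α τ : ℝ) (z : ℂ) : ℂ :=
  cexp (-(x * cosh z)) * cosh (α * z) * cexp (τ * I * z)

lemma differentiable_besselIntegrand (x α τ : ℝ) : Differentiable ℂ (besselIntegrand x α τ) := by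
  unfold besselIntegrand; fun_prop

lemma norm_besselIntegrand_le (x α τ u t : ℝ) :
    ‖besselIntegrand x α τ (u + t * I)‖ ≤
      besselKIntegrand α (x * Real.cos t) u * Real.exp (-(τ * t)) := by
  rw [besselIntegrand, besselKIntegrand, norm_mul, norm_mul, norm_exp, norm_exp]
  gcongr
  · exact le_of_eq (by simp [cosh_add_mul_I_re, mul_re]; ring)
  · simpa [mul_re] using norm_cosh_le (α * (u + t * I))
  · simp [mul_re]

lemma norm_besselIntegrand_le_of_mem_Icc {x α τ δ t : ℝ} (hx : 0 ≤ x) (hτ : 0 ≤ τ)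
    (hδ : δ ≤ Real.pi) (ht : t ∈ Icc 0 δ) (u : ℝ) :
    ‖besselIntegrand x α τ (u + t * I)‖ ≤ besselKIntegrand α (x * Real.cos δ) u := by
  have h_cos : Real.cos δ ≤ Real.cos t :=
    Real.cos_le_cos_of_nonneg_of_le_pi ht.1 hδ ht.2
  calc ‖besselIntegrand x α τ (u + t * I)‖
      ≤ besselKIntegrand α (x * Real.cos t) u * Real.exp (-(τ * t)) :=
        norm_besselIntegrand_le x α τ u t
    _ ≤ besselKIntegrand α (x * Real.cos δ) u * 1 := by
        gcongr
        · exact besselKIntegrand_nonneg _ _ _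
        · exact besselKIntegrand_antitone α u (by gcongr)
        · exact Real.exp_le_one_iff.2 (neg_nonpos.2 (mul_nonneg hτ ht.1))
    _ = besselKIntegrand α (x * Real.cos δ) u := mul_one _

lemma besselIntegrand_ofReal_mul_I (x α τ t : ℝ) :
    besselIntegrand x α τ (t * I) =
      ((Real.exp (-(x * Real.cos t)) * Real.cos (α * t) * Real.exp (-(τ * t)) : ℝ) : ℂ) := by
  have h_α : (α : ℂ) * (t * I) = (α * t : ℝ) * I := by push_cast; ring
  have h_τ : (τ : ℂ) * I * (t * I) = (-(τ * t) : ℝ) := by push_cast; ring_nf; rw [I_sq]; ring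
  rw [besselIntegrand, cosh_mul_I, h_α, h_τ, cosh_mul_I]
  norm_cast

lemma besselIntegrand_ofReal_re (x α τ u : ℝ) :
    (besselIntegrand x α τ u).re =
      Real.exp (-(x * Real.cosh u)) * Real.cosh (α * u) * Real.cos (τ * u) := by
  have h : besselIntegrand x α τ u =
      ((Real.exp (-(x * Real.cosh u)) * Real.cosh (α * u) : ℝ) : ℂ) * cexp ((τ * u : ℝ) * I) := by
    rw [besselIntegrand]; push_cast; ring_nf
  rw [h, re_ofReal_mul, exp_ofReal_mul_I_re]

lemma mul_cos_pos {x δ : ℝ} (hx : 0 < x) (hδ0 : 0 ≤ δ) (hδ : δ < Real.pi / 2) :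
    0 < x * Real.cos δ :=
  mul_pos hx (Real.cos_pos_of_mem_Ioo ⟨by linarith [Real.pi_pos], hδ⟩)

section Contour

variable {x α τ δ : ℝ}

lemma integrableOn_besselIntegrand_add_mul_I (hx : 0 ≤ x) (hτ : 0 ≤ τ) (hδ0 : 0 ≤ δ)
    (hδ : δ ≤ Real.pi) (hxδ : 0 < x * Real.cos δ) :
    IntegrableOn (fun u : ℝ => besselIntegrand x α τ (u + δ * I)) (Ioi 0) :=
  (integrableOn_besselKIntegrand α hxδ).mono'
    ((differentiable_besselIntegrand x α τ).continuous.comp (by fun_prop)).aestronglyMeasurable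
    (Eventually.of_forall fun u =>
      norm_besselIntegrand_le_of_mem_Icc hx hτ hδ ⟨hδ0, le_rfl⟩ u)

lemma integrableOn_besselIntegrand (hx : 0 < x) (hτ : 0 ≤ τ) :
    IntegrableOn (fun u : ℝ => besselIntegrand x α τ u) (Ioi 0) := by
  simpa using integrableOn_besselIntegrand_add_mul_I (α := α) (δ := 0) hx.le hτ le_rfl
    Real.pi_pos.le (by simpa using hx)

lemma integral_besselIntegrand_eq_add_mul_I (hx : 0 < x) (hτ : 0 ≤ τ) (hδ0 : 0 ≤ δ)
    (hδ : δ < Real.pi / 2) :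
    ∫ u in Ioi (0:ℝ), besselIntegrand x α τ u =
      (∫ u in Ioi (0:ℝ), besselIntegrand x α τ (u + δ * I)) +
        I • ∫ t in (0:ℝ)..δ, besselIntegrand x α τ (t * I) := by
  have hδπ : δ ≤ Real.pi := by linarith [Real.pi_pos]
  have hxδ := mul_cos_pos hx hδ0 hδ
  refine integral_Ioi_eq_integral_Ioi_add_mul_I (differentiable_besselIntegrand x α τ) δ
    (integrableOn_besselIntegrand hx hτ)
    (integrableOn_besselIntegrand_add_mul_I hx.le hτ hδ0 hδπ hxδ) ?_
  refine squeeze_zero_norm (fun R => ?_)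
    (by simpa only [zero_mul] using (tendsto_besselKIntegrand_atTop α hxδ).mul_const |δ - 0|)
  refine intervalIntegral.norm_integral_le_of_norm_le_const fun t ht => ?_
  rw [uIoc_of_le hδ0] at ht
  exact norm_besselIntegrand_le_of_mem_Icc hx.le hτ hδπ (Ioc_subset_Icc_self ht) R

end Contour

lemma I_smul_integral_besselIntegrand_mul_I_re (x α τ δ : ℝ) :
    (I • ∫ t in (0:ℝ)..δ, besselIntegrand x α τ (t * I)).re = 0 := by
  simp only [besselIntegrand_ofReal_mul_I, intervalIntegral.integral_ofReal, smul_eq_mul,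
    I_mul_re, ofReal_im, neg_zero]

lemma reK_eq_re_integral_besselIntegrand {x : ℝ} (hx : 0 < x) (α : ℝ) {τ : ℝ} (hτ : 0 ≤ τ) :
    ReK α τ x = (∫ u in Ioi (0:ℝ), besselIntegrand x α τ u).re := by
  rw [ReK, ← RCLike.re_eq_complex_re, ← integral_re (integrableOn_besselIntegrand hx hτ)]
  exact setIntegral_congr_fun measurableSet_Ioi fun u _ => (besselIntegrand_ofReal_re ..).symm

lemma reK_abs (α τ x : ℝ) : ReK α |τ| x = ReK α τ x := by
  refine setIntegral_congr_fun measurableSet_Ioi fun u (hu : 0 < u) => ?_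
  rw [show |τ| * u = |τ * u| by rw [abs_mul, abs_of_pos hu], Real.cos_abs]

/-- `|Re K_{α+iτ}(x)| ≤ e^{-δ|τ|} K_α(x cos δ)` for `δ ∈ [0, π/2)`. -/
theorem re_besselK_bound (x : ℝ) (hx : 0 < x) (α τ δ : ℝ)
    (hδ : δ ∈ Set.Ico 0 (Real.pi / 2)) :
    |ReK α τ x| ≤ Real.exp (-(δ * |τ|)) * Kreal α (x * Real.cos δ) := by
  obtain ⟨hδ0, hδ⟩ := hδ
  have hxδ := mul_cos_pos hx hδ0 hδ
  rw [← reK_abs, reK_eq_re_integral_besselIntegrand hx α (abs_nonneg τ),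
    integral_besselIntegrand_eq_add_mul_I hx (abs_nonneg τ) hδ0 hδ, add_re,
    I_smul_integral_besselIntegrand_mul_I_re, add_zero, Kreal, ← integral_const_mul]
  refine (abs_re_le_norm _).trans (norm_integral_le_of_norm_le
    ((integrableOn_besselKIntegrand α hxδ).const_mul _) (Eventually.of_forall fun u => ?_))
  calc ‖besselIntegrand x α |τ| (u + δ * I)‖
      ≤ besselKIntegrand α (x * Real.cos δ) u * Real.exp (-(|τ| * δ)) :=
        norm_besselIntegrand_le x α |τ| u δ
    _ = Real.exp (-(δ * |τ|)) * besselKIntegrand α (x * Real.cos δ) u := by ring_nf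
end

section
/- For x > 0, α, τ ∈ ℝ and δ ∈ [0, π/2), one has |Im K_{α+iτ}(x)| ≤ e^{-δ|τ|} K_α(x cos δ). -/
open MeasureTheory

/-- `Im K_{α+iτ}(x) = ∫_0^∞ e^{-x cosh u} sinh(α u) sin(τ u) du`. -/
noncomputable def ImK (α τ x : ℝ) : ℝ :=
  ∫ u in Set.Ioi (0:ℝ), Real.exp (-(x * Real.cosh u)) * Real.sinh (α * u) * Real.sin (τ * u)

/-!
The function `F(z) = exp(-x cosh z) sinh(α z) e^{iτz}` is entire, and on the real line `Im F` is
the even integrand of `ImK α τ x`, so `Im ∫_ℝ F = 2 ImK α τ x`. For `τ ≥ 0` shift the line of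
integration up to `Im z = δ`: since `|F(t + iy)| ≤ e^{-τy} e^{-x cos y cosh t} cosh(α t)` and
`cos y ≥ cos δ > 0` for `0 ≤ y ≤ δ`, the vertical sides of the rectangles vanish in the limit,
and the same bound integrates over the shifted line to `2 e^{-τδ} K_α(x cos δ)`. The case `τ < 0`
follows because `ImK` is odd in `τ`.
-/

open Set Filter Topology

open scoped Interval

namespace Complex

theorem integral_eq_integral_add_mul_I {f : ℂ → ℂ} {c : ℝ}
    (hf : DifferentiableOn ℂ f (im ⁻¹' [[0, c]]))
    (h₀ : Integrable fun t : ℝ => f t) (hc : Integrable fun t : ℝ => f (t + c * I))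
    {g : ℝ → ℝ} (hg : Tendsto g atTop (𝓝 0))
    (hfg : ∀ s : ℝ, ∀ y ∈ [[0, c]], ‖f (s + y * I)‖ ≤ g |s|) :
    ∫ t : ℝ, f t = ∫ t : ℝ, f (t + c * I) := by
  have vertical (s : ℝ) : ‖∫ y in (0 : ℝ)..c, f (s + y * I)‖ ≤ g |s| * |c| := by
    simpa using intervalIntegral.norm_integral_le_of_norm_le_const
      fun y hy => hfg s y (uIoc_subset_uIcc hy)
  have rectangle (R : ℝ) :
      (∫ t in -R..R, f t) - (∫ t in -R..R, f (t + c * I)) =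
        I • (∫ y in (0 : ℝ)..c, f (-R + y * I)) - I • ∫ y in (0 : ℝ)..c, f (R + y * I) := by
    have := integral_boundary_rect_eq_zero_of_differentiableOn f (-R) (R + c * I)
      (hf.mono fun z hz => by simpa using hz.2)
    simp only [neg_re, neg_im, add_re, add_im, ofReal_re, ofReal_im, mul_re, mul_im, I_re, I_im,
      mul_zero, mul_one, sub_zero, zero_add, add_zero, neg_zero, ofReal_zero, zero_mul,
      ofReal_neg] at this
    linear_combination this
  have sides : Tendsto (fun R : ℝ => (∫ t in -R..R, f t) - ∫ t in -R..R, f (t + c * I))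
      atTop (𝓝 0) := by
    refine squeeze_zero_norm' ?_ (by simpa using (hg.mul_const |c|).add (hg.mul_const |c|))
    filter_upwards [eventually_ge_atTop 0] with R hR
    rw [rectangle, ← smul_sub, norm_smul, norm_I, one_mul]
    refine (norm_sub_le _ _).trans (add_le_add ?_ ?_)
    · simpa [abs_of_nonneg hR] using vertical (-R)
    · simpa [abs_of_nonneg hR] using vertical R
  refine sub_eq_zero.mp (tendsto_nhds_unique ?_ sides)
  exact (intervalIntegral_tendsto_integral h₀ tendsto_neg_atTop_atBot tendsto_id).sub
    (intervalIntegral_tendsto_integral hc tendsto_neg_atTop_atBot tendsto_id)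

theorem cosh_add_mul_I_re_s4 (t y : ℝ) : (cosh (t + y * I)).re = Real.cosh t * Real.cos y := by
  simp [cosh_add, cosh_mul_I, sinh_mul_I, ← ofReal_cosh, ← ofReal_sinh, ← ofReal_cos,
    ← ofReal_sin, mul_re]

theorem norm_sinh_le (w : ℂ) : ‖sinh w‖ ≤ Real.cosh w.re := by
  rw [sinh, Real.cosh_eq, norm_div, RCLike.norm_ofNat, ← norm_exp, ← neg_re, ← norm_exp]
  gcongr
  exact norm_sub_le _ _

end Complex

theorem integral_eq_two_mul_integral_Ioi_of_even {f : ℝ → ℝ} (hf : Function.Even f) :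
    ∫ t, f t = 2 * ∫ t in Ioi 0, f t := by
  rw [← integral_comp_abs]
  congr with t
  rcases abs_choice t with h | h <;> rw [h]
  exact (hf t).symm

namespace Real

theorem one_add_sq_div_two_le_cosh (t : ℝ) : 1 + t ^ 2 / 2 ≤ cosh t := by
  simpa [Finset.sum_range_succ] using
    sum_le_hasSum (Finset.range 2) (fun n _ => by rw [pow_mul]; positivity) (hasSum_cosh t)

theorem cosh_le_exp_abs_s4 (t : ℝ) : cosh t ≤ exp |t| := by
  rw [← cosh_abs, cosh_eq]
  linarith [exp_le_exp.2 (neg_le_self (abs_nonneg t))]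

theorem exp_neg_mul_cosh_mul_cosh_le {c : ℝ} (hc : 0 < c) (α t : ℝ) :
    exp (-(c * cosh t)) * cosh (α * t) ≤ exp (α ^ 2 / c) * exp (-(c / 4) * t ^ 2) := by
  have amgm : |α| * |t| ≤ α ^ 2 / c + c / 4 * t ^ 2 := by
    have : α ^ 2 / c + c / 4 * t ^ 2 - |α| * |t| = (|α| - c * |t| / 2) ^ 2 / c := by
      field_simp
      rw [← sq_abs α, ← sq_abs t]
      ring
    linarith [show 0 ≤ (|α| - c * |t| / 2) ^ 2 / c by positivity]
  calc exp (-(c * cosh t)) * cosh (α * t)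
      ≤ exp (-(c * (t ^ 2 / 2))) * exp |α * t| := by
        gcongr
        · linarith [one_add_sq_div_two_le_cosh t]
        · exact cosh_le_exp_abs_s4 _
    _ = exp (-(c * (t ^ 2 / 2)) + |α| * |t|) := by rw [← exp_add, abs_mul]
    _ ≤ exp (α ^ 2 / c + -(c / 4) * t ^ 2) := exp_le_exp.2 (by linarith)
    _ = exp (α ^ 2 / c) * exp (-(c / 4) * t ^ 2) := exp_add _ _

theorem integrable_exp_neg_mul_cosh_mul_cosh {c : ℝ} (hc : 0 < c) (α : ℝ) :
    Integrable fun t => exp (-(c * cosh t)) * cosh (α * t) := by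
  refine ((integrable_exp_neg_mul_sq (by positivity : 0 < c / 4)).const_mul
    (exp (α ^ 2 / c))).mono' (by fun_prop) (Eventually.of_forall fun t => ?_)
  rw [norm_of_nonneg (by positivity)]
  exact exp_neg_mul_cosh_mul_cosh_le hc α t

theorem tendsto_exp_neg_mul_cosh_mul_cosh {c : ℝ} (hc : 0 < c) (α : ℝ) :
    Tendsto (fun t => exp (-(c * cosh t)) * cosh (α * t)) atTop (𝓝 0) := by
  have gauss : Tendsto (fun t : ℝ => exp (α ^ 2 / c) * exp (-(c / 4) * t ^ 2)) atTop (𝓝 0) := by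
    simpa using (tendsto_exp_atBot.comp ((tendsto_pow_atTop two_ne_zero).const_mul_atTop_of_neg
      (by linarith : -(c / 4) < 0))).const_mul (exp (α ^ 2 / c))
  exact squeeze_zero (fun t => by positivity) (exp_neg_mul_cosh_mul_cosh_le hc α) gauss

end Real

theorem integral_exp_neg_mul_cosh_mul_cosh (α c : ℝ) :
    ∫ t, Real.exp (-(c * Real.cosh t)) * Real.cosh (α * t) = 2 * Kreal α c :=
  integral_eq_two_mul_integral_Ioi_of_even fun t => by simp

theorem ImK_neg_tau (α τ x : ℝ) : ImK α (-τ) x = -ImK α τ x := by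
  simp only [ImK, ← integral_neg, neg_mul, Real.sin_neg, mul_neg]

open Complex

noncomputable def sinhKernel (x α τ : ℝ) (z : ℂ) : ℂ :=
  cexp (-(x * cosh z)) * sinh (α * z) * cexp (τ * z * I)

section sinhKernel

variable {x α τ : ℝ}

theorem differentiable_sinhKernel : Differentiable ℂ (sinhKernel x α τ) := by
  unfold sinhKernel; fun_prop

theorem norm_sinhKernel_le (t y : ℝ) :
    ‖sinhKernel x α τ (t + y * I)‖ ≤
      Real.exp (-(τ * y)) * (Real.exp (-(x * Real.cos y * Real.cosh t)) * Real.cosh (α * t)) := by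
  have hcosh : ‖cexp (-(x * cosh (t + y * I)))‖ = Real.exp (-(x * Real.cos y * Real.cosh t)) := by
    rw [norm_exp, neg_re, re_ofReal_mul, cosh_add_mul_I_re_s4]; ring_nf
  have hsinh : ‖sinh (α * (t + y * I))‖ ≤ Real.cosh (α * t) := by
    simpa using norm_sinh_le (α * (t + y * I))
  have hexp : ‖cexp (τ * (t + y * I) * I)‖ = Real.exp (-(τ * y)) := by
    simp [norm_exp, mul_re, mul_im]
  rw [sinhKernel, norm_mul, norm_mul, hcosh, hexp, mul_comm]
  gcongr

theorem integrable_sinhKernel_add_mul_I {y : ℝ} (hxy : 0 < x * Real.cos y) :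
    Integrable fun t : ℝ => sinhKernel x α τ (t + y * I) :=
  ((Real.integrable_exp_neg_mul_cosh_mul_cosh hxy α).const_mul _).mono'
    (differentiable_sinhKernel.continuous.comp (by fun_prop)).aestronglyMeasurable
    (Eventually.of_forall fun t => norm_sinhKernel_le t y)

theorem integrable_sinhKernel (hx : 0 < x) : Integrable fun t : ℝ => sinhKernel x α τ t := by
  simpa using integrable_sinhKernel_add_mul_I (α := α) (τ := τ) (y := 0) (by simpa using hx)

theorem sinhKernel_ofReal_im (t : ℝ) :
    (sinhKernel x α τ t).im =
      Real.exp (-(x * Real.cosh t)) * Real.sinh (α * t) * Real.sin (τ * t) := by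
  rw [sinhKernel, ← ofReal_mul τ t, exp_mul_I, ← ofReal_cosh, ← ofReal_mul, ← ofReal_mul,
    ← ofReal_sinh, ← ofReal_neg, ← ofReal_exp, ← ofReal_cos, ← ofReal_sin]
  simp only [mul_im, mul_re, add_re, add_im, ofReal_re, ofReal_im, I_re, I_im]
  ring

theorem integral_sinhKernel_im (hx : 0 < x) :
    (∫ t : ℝ, sinhKernel x α τ t).im = 2 * ImK α τ x := by
  rw [← RCLike.im_to_complex, ← integral_im (integrable_sinhKernel hx)]
  simp only [RCLike.im_to_complex, sinhKernel_ofReal_im]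
  exact integral_eq_two_mul_integral_Ioi_of_even fun t => by simp

theorem integral_sinhKernel_eq_integral_add_mul_I (hx : 0 < x) (hτ : 0 ≤ τ) {δ : ℝ}
    (hδ₀ : 0 ≤ δ) (hδ : δ < Real.pi / 2) :
    ∫ t : ℝ, sinhKernel x α τ t = ∫ t : ℝ, sinhKernel x α τ (t + δ * I) := by
  have hxδ : 0 < x * Real.cos δ :=
    mul_pos hx (Real.cos_pos_of_mem_Ioo ⟨by linarith [Real.pi_pos], hδ⟩)
  refine integral_eq_integral_add_mul_I differentiable_sinhKernel.differentiableOn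
    (integrable_sinhKernel hx) (integrable_sinhKernel_add_mul_I hxδ)
    (Real.tendsto_exp_neg_mul_cosh_mul_cosh hxδ α) fun s y hy => ?_
  rw [uIcc_of_le hδ₀] at hy
  have hcos_y : Real.cos δ ≤ Real.cos y :=
    Real.cos_le_cos_of_nonneg_of_le_pi hy.1 (by linarith [Real.pi_pos]) hy.2
  calc ‖sinhKernel x α τ (s + y * I)‖
      ≤ Real.exp (-(τ * y)) * (Real.exp (-(x * Real.cos y * Real.cosh s)) * Real.cosh (α * s)) :=
        norm_sinhKernel_le s y
    _ ≤ 1 * (Real.exp (-(x * Real.cos δ * Real.cosh s)) * Real.cosh (α * s)) := by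
        gcongr
        exact Real.exp_le_one_iff.2 (by nlinarith [hy.1])
    _ = Real.exp (-(x * Real.cos δ * Real.cosh |s|)) * Real.cosh (α * |s|) := by
        rw [one_mul, Real.cosh_abs, ← Real.cosh_abs (α * s), ← Real.cosh_abs (α * |s|),
          abs_mul, abs_mul, abs_abs]

theorem norm_integral_sinhKernel_add_mul_I_le {δ : ℝ} (hxδ : 0 < x * Real.cos δ) :
    ‖∫ t : ℝ, sinhKernel x α τ (t + δ * I)‖ ≤
      Real.exp (-(τ * δ)) * (2 * Kreal α (x * Real.cos δ)) :=
  calc ‖∫ t : ℝ, sinhKernel x α τ (t + δ * I)‖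
      ≤ ∫ t : ℝ, Real.exp (-(τ * δ)) *
          (Real.exp (-(x * Real.cos δ * Real.cosh t)) * Real.cosh (α * t)) :=
        norm_integral_le_of_norm_le ((Real.integrable_exp_neg_mul_cosh_mul_cosh hxδ α).const_mul _)
          (Eventually.of_forall fun t => norm_sinhKernel_le t δ)
    _ = Real.exp (-(τ * δ)) * (2 * Kreal α (x * Real.cos δ)) := by
        rw [integral_const_mul, integral_exp_neg_mul_cosh_mul_cosh]

end sinhKernel

theorem abs_ImK_le_of_tau_nonneg {x : ℝ} (hx : 0 < x) (α : ℝ) {τ δ : ℝ} (hτ : 0 ≤ τ)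
    (hδ₀ : 0 ≤ δ) (hδ : δ < Real.pi / 2) :
    |ImK α τ x| ≤ Real.exp (-(δ * τ)) * Kreal α (x * Real.cos δ) := by
  have hxδ : 0 < x * Real.cos δ :=
    mul_pos hx (Real.cos_pos_of_mem_Ioo ⟨by linarith [Real.pi_pos], hδ⟩)
  have key : 2 * |ImK α τ x| ≤ Real.exp (-(τ * δ)) * (2 * Kreal α (x * Real.cos δ)) :=
    calc 2 * |ImK α τ x| = |(∫ t : ℝ, sinhKernel x α τ t).im| := by
          rw [integral_sinhKernel_im hx, abs_mul, abs_two]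
      _ ≤ ‖∫ t : ℝ, sinhKernel x α τ t‖ := abs_im_le_norm _
      _ = ‖∫ t : ℝ, sinhKernel x α τ (t + δ * I)‖ := by
          rw [integral_sinhKernel_eq_integral_add_mul_I hx hτ hδ₀ hδ]
      _ ≤ _ := norm_integral_sinhKernel_add_mul_I_le hxδ
  rw [mul_comm δ]
  linarith

/-- `|Im K_{α+iτ}(x)| ≤ e^{-δ|τ|} K_α(x cos δ)` for `δ ∈ [0, π/2)`. -/
theorem im_besselK_bound (x : ℝ) (hx : 0 < x) (α τ δ : ℝ)
    (hδ : δ ∈ Set.Ico 0 (Real.pi / 2)) :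
    |ImK α τ x| ≤ Real.exp (-(δ * |τ|)) * Kreal α (x * Real.cos δ) := by
  obtain ⟨hδ₀, hδ⟩ := hδ
  rcases le_total 0 τ with hτ | hτ
  · rw [abs_of_nonneg hτ]
    exact abs_ImK_le_of_tau_nonneg hx α hτ hδ₀ hδ
  · simpa [abs_of_nonpos hτ, ImK_neg_tau] using
      abs_ImK_le_of_tau_nonneg hx α (neg_nonneg.2 hτ) hδ₀ hδ
end
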